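/- Let q = 2^n and let e ≥ 0 be odd. Then for all a ∈ F_q: D_{q^e−1}(a) = 0 if a = 0 or Tr(1/a) = 0, and D_{q^e−1}(a) = a^2 if Tr(1/a) = 1; while D_{q^e+1}(a) = a^2 if a = 0 or Tr(1/a) = 0, and D_{q^e+1}(a) = 0 if Tr(1/a) = 1. If e is even, then D_{q^e−1}(a) = 0 and D_{q^e+1}(a) = a^2 for all a ∈ F_q. -/

import Mathlib

set_option maxHeartbeats 1000000
open Polynomial

lemma zmod2_cases (t : ZMod 2) : t = 0 ∨ t = 1 := by revert t; decide


lemma key_both {A : Type*} [CommRing A] (h2 : (2:A) = 0) (u w b : A) (huw : u * w = 1)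
    (hb : b = u + w) (m : ℕ) (hm : 1 ≤ m) :
    (u ^ m = u → (dickson 1 (1:A) (m - 1)).eval b = 0 ∧
      (dickson 1 (1:A) (m + 1)).eval b = b ^ 2) ∧
    (u ^ m = w → (dickson 1 (1:A) (m - 1)).eval b = b ^ 2 ∧
      (dickson 1 (1:A) (m + 1)).eval b = 0) := by
  have hwu : w * u = 1 := by rw [mul_comm]; exact huw
  set U : Aˣ := ⟨u, w, huw, hwu⟩ with hU
  have hcoe : (U : A) = u := rfl
  have hinv : ((U⁻¹ : Aˣ) : A) = w := rfl
  have hsq : u ^ 2 + w ^ 2 = b ^ 2 := by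
    have : b ^ 2 = u ^ 2 + w ^ 2 + 2 * (u * w) := by rw [hb]; ring
    rw [huw, mul_one, h2, add_zero] at this; exact this.symm
  have e1 : (dickson 1 (1:A) (m-1)).eval b = u ^ (m-1) + w ^ (m-1) := by
    rw [hb]; exact dickson_one_one_eval_add_inv u w huw _
  have e2 : (dickson 1 (1:A) (m+1)).eval b = u ^ (m+1) + w ^ (m+1) := by
    rw [hb]; exact dickson_one_one_eval_add_inv u w huw _
  have hmm : m - 1 + 1 = m := Nat.succ_pred_eq_of_pos hm
  constructor
  · intro hfix
    have hUfix : U ^ m = U := Units.ext (by simpa using hfix)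
    have h1 : U ^ (m-1) = 1 := by
      have : U ^ (m-1) * U = 1 * U := by rw [← pow_succ, hmm, hUfix, one_mul]
      exact mul_right_cancel this
    have hu1 : u ^ (m-1) = 1 := by
      have := congrArg (Units.val) h1; simpa using this
    have hw1 : w ^ (m-1) = 1 := by
      have := congrArg (Units.val) (congrArg (·⁻¹) h1); simpa [← inv_pow, hinv] using this
    have hu2 : u ^ (m+1) = u ^ 2 := by rw [pow_succ, hfix, sq]
    have hw2 : w ^ (m+1) = w ^ 2 := by
      have : w ^ m = w := by
        have := congrArg (Units.val) (congrArg (·⁻¹) hUfix); simpa [← inv_pow, hinv] using this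
      rw [pow_succ, this, sq]
    refine ⟨?_, ?_⟩
    · rw [e1, hu1, hw1, ← two_mul, mul_one, h2]
    · rw [e2, hu2, hw2, hsq]
  · intro hflip
    have hUflip : U ^ m = U⁻¹ := Units.ext (by simpa [hcoe, hinv] using hflip)
    have h1 : U ^ (m+1) = 1 := by rw [pow_succ, hUflip, inv_mul_cancel]
    have h0 : U ^ (m-1) = U⁻¹ ^ 2 := by
      have : U ^ (m-1) * U = U⁻¹ ^ 2 * U := by
        rw [← pow_succ, hmm, hUflip, sq, mul_assoc, inv_mul_cancel, mul_one]
      exact mul_right_cancel this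
    have hu1 : u ^ (m+1) = 1 := by have := congrArg (Units.val) h1; simpa using this
    have hw1 : w ^ (m+1) = 1 := by
      have := congrArg (Units.val) (congrArg (·⁻¹) h1); simpa [← inv_pow, hinv] using this
    have hu0 : u ^ (m-1) = w ^ 2 := by
      have := congrArg (Units.val) h0; simpa [← inv_pow, hcoe, hinv] using this
    have hw0 : w ^ (m-1) = u ^ 2 := by
      have := congrArg (Units.val) (congrArg (·⁻¹) h0); simpa [← inv_pow, hcoe, hinv] using this
    refine ⟨?_, ?_⟩
    · rw [e1, hu0, hw0, add_comm, hsq]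
    · rw [e2, hu1, hw1, ← two_mul, mul_one, h2]

-- transfer from an extension ring to F
lemma transfer {F A : Type*} [Field F] [CommRing A] [Nontrivial A] [Algebra F A]
    (h2 : (2:A) = 0) (a : F) (u w : A) (huw : u * w = 1)
    (hb : algebraMap F A a = u + w) (m : ℕ) (hm : 1 ≤ m) :
    (u ^ m = u → (dickson 1 (1:F) (m - 1)).eval a = 0 ∧
      (dickson 1 (1:F) (m + 1)).eval a = a ^ 2) ∧
    (u ^ m = w → (dickson 1 (1:F) (m - 1)).eval a = a ^ 2 ∧
      (dickson 1 (1:F) (m + 1)).eval a = 0) := by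
  have hinj : Function.Injective (algebraMap F A) := (algebraMap F A).injective
  have hev : ∀ k : ℕ, algebraMap F A ((dickson 1 (1:F) k).eval a)
      = (dickson 1 (1:A) k).eval (algebraMap F A a) := by
    intro k
    rw [← eval₂_at_apply, ← eval_map, map_dickson, map_one]
  have := key_both h2 u w (algebraMap F A a) huw hb m hm
  constructor
  · intro hfix
    obtain ⟨e1, e2⟩ := this.1 hfix
    constructor
    · apply hinj; rw [hev, e1, map_zero]
    · apply hinj; rw [hev, e2, map_pow]
  · intro hflip
    obtain ⟨e1, e2⟩ := this.2 hflip
    constructor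
    · apply hinj; rw [hev, e1, map_pow]
    · apply hinj; rw [hev, e2, map_zero]

section
variable {F : Type*} [Field F] [Fintype F] [Algebra (ZMod 2) F]

set_option linter.unusedSectionVars false

lemma char2' : CharP F 2 := charP_of_injective_algebraMap (algebraMap (ZMod 2) F).injective 2

lemma tr_sq' (x : F) :
    Algebra.trace (ZMod 2) F (x ^ 2) = Algebra.trace (ZMod 2) F x := by
  haveI := (char2' (F := F))
  haveI : Fact (Nat.Prime 2) := ⟨Nat.prime_two⟩
  haveI : PerfectRing F 2 := inferInstance
  let e : F ≃ₐ[ZMod 2] F :=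
    { frobeniusEquiv F 2 with
      commutes' := fun c => by
        simp only [frobeniusEquiv_apply, RingEquiv.toEquiv_eq_coe]
        show (algebraMap (ZMod 2) F c) ^ 2 = algebraMap (ZMod 2) F c
        rw [← map_pow, ZMod.pow_card c] }
  have := Algebra.trace_eq_of_algEquiv e x
  rw [show e x = x ^ 2 from rfl] at this; exact this

lemma exists_AS (x : F) (h : Algebra.trace (ZMod 2) F x = 0) :
    ∃ y : F, y ^ 2 + y = x := by
  haveI := (char2' (F := F))
  haveI : Fact (Nat.Prime 2) := ⟨Nat.prime_two⟩
  let φ : F →ₗ[ZMod 2] F :=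
    { toFun := fun y => y ^ 2 + y
      map_add' := fun y z => by
        show (y + z) ^ 2 + (y + z) = (y ^ 2 + y) + (z ^ 2 + z)
        rw [add_pow_char (p := 2)]; ring
      map_smul' := fun c y => by
        show (c • y) ^ 2 + c • y = c • (y ^ 2 + y)
        rcases zmod2_cases c with rfl | rfl <;> simp }
  have hφ : ∀ y, φ y = y ^ 2 + y := fun y => rfl
  have hker : LinearMap.ker φ = Submodule.span (ZMod 2) {(1 : F)} := by
    ext z
    rw [LinearMap.mem_ker, Submodule.mem_span_singleton]
    constructor
    · intro hz
      rw [hφ] at hz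
      have : z * (z + 1) = 0 := by rw [← hz]; ring
      rcases mul_eq_zero.1 this with h0 | h1
      · exact ⟨0, by simp [h0]⟩
      · refine ⟨1, ?_⟩
        have : z = -1 := by linear_combination h1
        simp [this, CharTwo.neg_eq]
    · rintro ⟨c, rfl⟩
      rcases zmod2_cases c with rfl | rfl
      · rw [zero_smul, map_zero]
      · rw [one_smul, hφ, one_pow, CharTwo.add_self_eq_zero]
  have hker1 : Module.finrank (ZMod 2) (LinearMap.ker φ) = 1 := by
    rw [hker]; exact finrank_span_singleton one_ne_zero
  let T : F →ₗ[ZMod 2] ZMod 2 := Algebra.trace (ZMod 2) F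
  have hTsurj : LinearMap.range T = ⊤ := by
    rcases Ideal.eq_bot_or_top (K := ZMod 2) (LinearMap.range T) with hb | ht
    · exfalso
      have h1 : (1 : F) ≠ 0 := one_ne_zero
      have := (traceForm_nondegenerate (ZMod 2) F).1 (1 : F)
      apply h1; apply this
      intro b
      rw [Algebra.traceForm_apply, one_mul]
      have : T b ∈ LinearMap.range T := LinearMap.mem_range_self T b
      rw [hb] at this
      simpa using this
    · exact ht
  have hrange : LinearMap.range φ ≤ LinearMap.ker T := by
    rintro _ ⟨y, rfl⟩
    rw [LinearMap.mem_ker]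
    show Algebra.trace (ZMod 2) F (y ^ 2 + y) = 0
    rw [map_add, tr_sq', CharTwo.add_self_eq_zero]
  have heq : LinearMap.range φ = LinearMap.ker T := by
    apply Submodule.eq_of_le_of_finrank_le hrange
    have h1 := LinearMap.finrank_range_add_finrank_ker φ
    have h2 := LinearMap.finrank_range_add_finrank_ker T
    have h3 : Module.finrank (ZMod 2) (LinearMap.range T) = 1 := by
      rw [hTsurj, finrank_top, Module.finrank_self]
    omega
  have : x ∈ LinearMap.range φ := by rw [heq, LinearMap.mem_ker]; exact h
  rcases this with ⟨y, hy⟩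
  exact ⟨y, hy⟩

lemma quad (n : ℕ) (hn : 1 ≤ n) (hq : Fintype.card F = 2 ^ n)
    (a : F) (ha : a ≠ 0) (htr : Algebra.trace (ZMod 2) F a⁻¹ = 1) (e : ℕ) :
    (Odd e → (dickson 1 (1:F) (Fintype.card F ^ e - 1)).eval a = a ^ 2 ∧
      (dickson 1 (1:F) (Fintype.card F ^ e + 1)).eval a = 0) ∧
    (Even e → (dickson 1 (1:F) (Fintype.card F ^ e - 1)).eval a = 0 ∧
      (dickson 1 (1:F) (Fintype.card F ^ e + 1)).eval a = a ^ 2) := by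
  haveI := (char2' (F := F))
  haveI : Fact (Nat.Prime 2) := ⟨Nat.prime_two⟩
  have h2F : (2:F) = 0 := by
    have := CharP.cast_eq_zero F 2; exact_mod_cast this
  have hno : ∀ c : F, c ^ 2 + a * c + 1 ≠ 0 := by
    intro c hc
    have hc0 : c ≠ 0 := by rintro rfl; simp at hc
    have h2inv : a * a⁻¹ = 1 := mul_inv_cancel₀ ha
    have h1 : a * (c * a⁻¹) = c := by field_simp
    have hv : (c * a⁻¹) ^ 2 + (c * a⁻¹) = (a⁻¹) ^ 2 := by
      apply mul_left_cancel₀ (pow_ne_zero 2 ha)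
      calc a ^ 2 * ((c * a⁻¹) ^ 2 + c * a⁻¹)
          = (a * (c * a⁻¹)) ^ 2 + a * (a * (c * a⁻¹)) := by ring
        _ = c ^ 2 + a * c := by rw [h1]
        _ = (a * a⁻¹) ^ 2 := by rw [h2inv]; linear_combination hc - h2F
        _ = a ^ 2 * (a⁻¹) ^ 2 := by ring
    have htr2 : Algebra.trace (ZMod 2) F ((a⁻¹) ^ 2) = 0 := by
      rw [← hv, map_add, tr_sq', CharTwo.add_self_eq_zero]
    rw [tr_sq', htr] at htr2
    exact one_ne_zero htr2
  set f : F[X] := X ^ 2 + (C a * X + 1) with hf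
  have hfm : f.Monic := by
    apply monic_X_pow_add
    apply lt_of_le_of_lt (degree_add_le _ _)
    rw [max_lt_iff]
    constructor
    · apply lt_of_le_of_lt (degree_mul_le _ _)
      apply lt_of_le_of_lt (add_le_add degree_C_le degree_X_le)
      norm_num
    · exact degree_one_le.trans_lt (by norm_num)
  have hfd : f.natDegree = 2 := by rw [hf]; compute_degree!
  have hf0 : f ≠ 0 := hfm.ne_zero
  have heval : ∀ c : F, f.eval c = c ^ 2 + a * c + 1 := by
    intro c; simp [hf]; ring
  have hirr : Irreducible f := by
    rw [irreducible_iff_roots_eq_zero_of_degree_le_three (by omega) (by omega)]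
    rw [Multiset.eq_zero_iff_forall_notMem]
    intro c hc
    rw [mem_roots hf0] at hc
    exact hno c (by rw [← heval c]; exact hc)
  haveI : Fact (Irreducible f) := ⟨hirr⟩
  have hinj : Function.Injective (algebraMap F (AdjoinRoot f)) :=
    (algebraMap F (AdjoinRoot f)).injective
  haveI : CharP (AdjoinRoot f) 2 := charP_of_injective_algebraMap hinj 2
  have h2A : (2 : AdjoinRoot f) = 0 := by
    have := CharP.cast_eq_zero (AdjoinRoot f) 2; exact_mod_cast this
  set i := algebraMap F (AdjoinRoot f) with hi
  set u : AdjoinRoot f := AdjoinRoot.root f with hu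
  have hrel : u ^ 2 + i a * u + 1 = 0 := by
    have := AdjoinRoot.eval₂_root f
    have h' := this
    simp only [hf, eval₂_add, eval₂_mul, eval₂_pow, eval₂_X, eval₂_C, eval₂_one] at h'
    rw [hi, AdjoinRoot.algebraMap_eq]
    linear_combination h'
  set w : AdjoinRoot f := u + i a with hw
  have huw : u * w = 1 := by rw [hw]; linear_combination hrel - h2A
  have hb : i a = u + w := by rw [hw]; linear_combination (-u) * h2A
  set q := Fintype.card F with hqc
  have hqn : q = 2 ^ n := hq
  have hq0 : q ≠ 0 := by rw [hqn]; positivity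
  have hiq : ∀ c : F, (i c) ^ q = i c := by
    intro c; rw [hi, ← map_pow, FiniteField.pow_card]
  have hrootq : (u ^ q) ^ 2 + i a * u ^ q + 1 = 0 := by
    have h0 : (u ^ 2 + i a * u + 1) ^ q = 0 := by rw [hrel, zero_pow hq0]
    rw [hqn, add_pow_char_pow, add_pow_char_pow, one_pow, mul_pow, ← hqn, hiq] at h0
    rw [show (u ^ q) ^ 2 = (u ^ 2) ^ q from by
      rw [← pow_mul, ← pow_mul, Nat.mul_comm]]
    exact h0
  have hdich : (u ^ q + u) * (u ^ q + w) = 0 := by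
    linear_combination hrootq - huw + (u ^ q) * hb + (-1 + 2*u*(u^q) + u*(i a) + u^2) * h2A
  have hune : u ^ q ≠ u := by
    intro hfix
    set g : (AdjoinRoot f)[X] := X ^ q - X with hg
    have hg0 : g ≠ 0 := by
      rw [hg, hqn]
      exact FiniteField.X_pow_card_pow_sub_X_ne_zero _ (by omega) (by norm_num)
    have hgd : g.natDegree = q := by
      rw [hg, hqn]
      exact FiniteField.X_pow_card_pow_sub_X_natDegree_eq _ (by omega) (by norm_num)
    have hmem : ∀ c : F, i c ∈ g.roots.toFinset := by
      intro c
      rw [Multiset.mem_toFinset, mem_roots hg0]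
      simp [hg, IsRoot, hiq c]
    have humem : u ∈ g.roots.toFinset := by
      rw [Multiset.mem_toFinset, mem_roots hg0]
      simp [hg, IsRoot, hfix]
    have hunotin : u ∉ Finset.image i Finset.univ := by
      intro hmem'
      rcases Finset.mem_image.1 hmem' with ⟨c, -, hc⟩
      apply hno c
      apply hinj
      rw [map_add, map_add, map_pow, map_mul, map_one, map_zero, hc]
      exact hrel
    have hsub : insert u (Finset.image i Finset.univ) ⊆ g.roots.toFinset := by
      intro x hx
      rcases Finset.mem_insert.1 hx with rfl | hx
      · exact humem
      · rcases Finset.mem_image.1 hx with ⟨c, -, rfl⟩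
        exact hmem c
    have hcard : q + 1 ≤ g.roots.toFinset.card := by
      have h1 : (insert u (Finset.image i Finset.univ)).card = q + 1 := by
        rw [Finset.card_insert_of_notMem hunotin,
          Finset.card_image_of_injective _ hinj, Finset.card_univ]
      rw [← h1]
      exact Finset.card_le_card hsub
    have hle : g.roots.toFinset.card ≤ q := by
      calc g.roots.toFinset.card ≤ Multiset.card g.roots := Multiset.toFinset_card_le _
        _ ≤ g.natDegree := card_roots' g
        _ = q := hgd
    omega
  have hflip : u ^ q = w := by
    rcases mul_eq_zero.1 hdich with h1 | h2
    · exact absurd (sub_eq_zero.1 (by rw [CharTwo.sub_eq_add]; exact h1)) hune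
    · exact sub_eq_zero.1 (by rw [CharTwo.sub_eq_add]; exact h2)
  have hwq : w ^ q = u := by
    have hstep : w ^ q = u ^ q + (i a) ^ q := by rw [hw, hqn, add_pow_char_pow, ← hqn]
    rw [hstep, hiq, hflip, hw]
    linear_combination (i a) * h2A
  -- now compute powers u^(q^e)
  have hQ1 : 1 ≤ q ^ e := Nat.one_le_pow _ _ (Nat.pos_of_ne_zero hq0)
  have heven : ∀ k : ℕ, u ^ (q ^ (2 * k)) = u := by
    intro k
    induction k with
    | zero => simp
    | succ k ih =>
      have : 2 * (k + 1) = 2 * k + 1 + 1 := by ring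
      rw [this, pow_succ, pow_succ, pow_mul, pow_mul, ih, hflip, hwq]
  have htrans := transfer h2A a u w huw hb (q ^ e) hQ1
  constructor
  · rintro ⟨k, hk⟩
    apply htrans.2
    rw [hk, pow_succ, pow_mul, heven k]
    exact hflip
  · rintro ⟨k, hk⟩
    apply htrans.1
    have : e = 2 * k := by omega
    rw [this, heven k]

end

theorem stmt7 (F : Type*) [Field F] [Fintype F] [Algebra (ZMod 2) F] (n : ℕ) (hn : 1 ≤ n)
    (hq : Fintype.card F = 2 ^ n) (e : ℕ) :
    (Odd e → ∀ a : F,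
      ((a = 0 ∨ Algebra.trace (ZMod 2) F a⁻¹ = 0) →
        (dickson 1 (1 : F) (Fintype.card F ^ e - 1)).eval a = 0 ∧
        (dickson 1 (1 : F) (Fintype.card F ^ e + 1)).eval a = a ^ 2) ∧
      (Algebra.trace (ZMod 2) F a⁻¹ = 1 →
        (dickson 1 (1 : F) (Fintype.card F ^ e - 1)).eval a = a ^ 2 ∧
        (dickson 1 (1 : F) (Fintype.card F ^ e + 1)).eval a = 0)) ∧
    (Even e → ∀ a : F,
      (dickson 1 (1 : F) (Fintype.card F ^ e - 1)).eval a = 0 ∧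
      (dickson 1 (1 : F) (Fintype.card F ^ e + 1)).eval a = a ^ 2) := by
  haveI := (char2' (F := F))
  haveI : Fact (Nat.Prime 2) := ⟨Nat.prime_two⟩
  have h2F : (2:F) = 0 := by
    have := CharP.cast_eq_zero F 2; exact_mod_cast this
  have hq0 : Fintype.card F ≠ 0 := Fintype.card_ne_zero
  have hQ1 : 1 ≤ Fintype.card F ^ e := Nat.one_le_pow _ _ (Nat.pos_of_ne_zero hq0)
  -- the "fixed" case: a = 0 or trace zero
  have main0 : ∀ a : F, (a = 0 ∨ Algebra.trace (ZMod 2) F a⁻¹ = 0) →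
      (dickson 1 (1 : F) (Fintype.card F ^ e - 1)).eval a = 0 ∧
      (dickson 1 (1 : F) (Fintype.card F ^ e + 1)).eval a = a ^ 2 := by
    intro a hcase
    rcases hcase with rfl | htr0
    · -- a = 0 : take u = w = 1 in F itself
      have := transfer (F := F) (A := F) h2F 0 1 1 (one_mul (1:F))
        (by rw [map_zero]; linear_combination -h2F) (Fintype.card F ^ e) hQ1
      exact this.1 (one_pow _)
    · by_cases ha : a = 0
      · subst ha
        have := transfer (F := F) (A := F) h2F 0 1 1 (one_mul (1:F))
          (by rw [map_zero]; linear_combination -h2F) (Fintype.card F ^ e) hQ1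
        exact this.1 (one_pow _)
      · -- trace of a⁻¹ is zero: solve v^2 + v = a⁻¹ ^ 2 in F
        have htr2 : Algebra.trace (ZMod 2) F ((a⁻¹) ^ 2) = 0 := by
          rw [tr_sq']; exact htr0
        obtain ⟨v, hv⟩ := exists_AS _ htr2
        set u : F := a * v with hu
        set w : F := a * v + a with hw
        have huw : u * w = 1 := by
          have h1 : a * a⁻¹ = 1 := mul_inv_cancel₀ ha
          have : u * w = a ^ 2 * (v ^ 2 + v) := by rw [hu, hw]; ring
          rw [this, hv]
          calc a ^ 2 * (a⁻¹) ^ 2 = (a * a⁻¹) ^ 2 := by ring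
            _ = 1 := by rw [h1, one_pow]
        have hb : algebraMap F F a = u + w := by
          rw [hu, hw]
          show a = a * v + (a * v + a)
          linear_combination (-(a * v)) * h2F
        have hfix : u ^ (Fintype.card F ^ e) = u := FiniteField.pow_card_pow e u
        exact (transfer h2F a u w huw hb (Fintype.card F ^ e) hQ1).1 hfix
  refine ⟨fun he a => ⟨main0 a, fun htr1 => ?_⟩, fun he a => ?_⟩
  · -- odd e, trace 1
    have ha : a ≠ 0 := by
      rintro rfl
      rw [inv_zero, map_zero] at htr1
      exact one_ne_zero htr1.symm
    exact (quad n hn hq a ha htr1 e).1 he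
  · -- even e
    by_cases ha : a = 0
    · exact main0 a (Or.inl ha)
    · rcases zmod2_cases (Algebra.trace (ZMod 2) F a⁻¹) with htr0 | htr1
      · exact main0 a (Or.inr htr0)
      · exact (quad n hn hq a ha htr1 e).2 he
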